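/- Let λ₀ be a real number with 0 < λ₀ < 1/2 and set a = 4λ₀/(1 + 4λ₀²). Then (1/π) ∫₀^π cos²(ν)·sin(ν) · log((1 − a·sin(ν))/(1 + a·sin(ν))) dν = −λ₀ + (4/3)·λ₀³. -/

import Mathlib

/-!
Integrating by parts against `-cos³/3` (the boundary terms vanish since `sin 0 = sin π = 0`) turns
the integral into `-(2a/3) ∫₀^π cos⁴ν / (1 - a² sin²ν) dν`. With `q = (1 - 4λ₀²)/(1 + 4λ₀²)` one has
`1 - a² = q²`, so the denominator is `cos²ν + q² sin²ν`. Partial fractions reduce the remaining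
integral to `∫₀^π dν / (cos²ν + q² sin²ν) = π / q`, computed from a continuous branch of
`arctan (q tan ν)`; this gives `∫₀^π cos⁴ν / (cos²ν + q² sin²ν) dν = π (2q + 1) / (2 (1 + q)²)`,
and substituting `a` and `q` yields `-λ₀ + 4λ₀³/3`.
-/

open Real MeasureTheory

theorem cos_sq_add_mul_sin_sq_pos {q : ℝ} (hq : 0 < q) (x : ℝ) :
    0 < cos x ^ 2 + q * sin x ^ 2 := by
  rcases eq_or_ne (cos x) 0 with hc | hc
  · have hs : sin x ^ 2 = 1 := by nlinarith [sin_sq_add_cos_sq x]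
    simp [hc, hs, hq]
  · have := sin_sq_add_cos_sq x
    positivity

/-- On `(-π/2, π/2)` this is `arctan (q * tan x)` (subtraction formula for `tan`), but unlike that
function it is continuous on `ℝ` and gains exactly `π` over `[0, π]`. -/
noncomputable def arctanMulTan (q x : ℝ) : ℝ :=
  x + arctan ((q - 1) * sin x * cos x / (cos x ^ 2 + q * sin x ^ 2))

theorem hasDerivAt_arctanMulTan {q : ℝ} (hq : 0 < q) (x : ℝ) :
    HasDerivAt (arctanMulTan q) (q / (cos x ^ 2 + q ^ 2 * sin x ^ 2)) x := by
  have hD := cos_sq_add_mul_sin_sq_pos hq x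
  have hD2 := cos_sq_add_mul_sin_sq_pos (pow_pos hq 2) x
  have h := (hasDerivAt_id x).add
    ((((hasDerivAt_sin x).const_mul (q - 1)).mul (hasDerivAt_cos x)).div
      (((hasDerivAt_cos x).pow 2).add (((hasDerivAt_sin x).pow 2).const_mul q)) hD.ne').arctan
  refine h.congr_deriv ?_
  simp only [Pi.mul_apply, Pi.div_apply, Pi.add_apply, Pi.pow_apply]
  field_simp
  linear_combination
    (q * (sin x ^ 2 + cos x ^ 2) * (cos x ^ 2 + q ^ 2 * sin x ^ 2)) * sin_sq_add_cos_sq x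

theorem Continuous.div_cos_sq_add_mul_sin_sq {f : ℝ → ℝ} (hf : Continuous f) {q : ℝ}
    (hq : 0 < q) :
    Continuous fun x => f x / (cos x ^ 2 + q * sin x ^ 2) :=
  hf.div (by fun_prop) fun x => (cos_sq_add_mul_sin_sq_pos hq x).ne'

theorem integral_one_div_cos_sq_add_sq_mul_sin_sq {q : ℝ} (hq : 0 < q) :
    ∫ x in (0 : ℝ)..π, 1 / (cos x ^ 2 + q ^ 2 * sin x ^ 2) = π / q := by
  have h : ∫ x in (0 : ℝ)..π, q / (cos x ^ 2 + q ^ 2 * sin x ^ 2) = π := by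
    rw [intervalIntegral.integral_eq_sub_of_hasDerivAt (fun x _ => hasDerivAt_arctanMulTan hq x)
      ((continuous_const.div_cos_sq_add_mul_sin_sq (pow_pos hq 2)).intervalIntegrable _ _)]
    simp [arctanMulTan]
  simp_rw [div_eq_mul_one_div q, intervalIntegral.integral_const_mul] at h
  rw [eq_div_iff hq.ne']
  linarith

theorem integral_cos_pow_four_div_cos_sq_add_sq_mul_sin_sq {q : ℝ} (hq : 0 < q) :
    ∫ x in (0 : ℝ)..π, cos x ^ 4 / (cos x ^ 2 + q ^ 2 * sin x ^ 2)
      = π * (2 * q + 1) / (2 * (1 + q) ^ 2) := by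
  rcases eq_or_ne q 1 with rfl | hq1
  · simp only [one_pow, one_mul, cos_sq_add_sin_sq, div_one, integral_cos_pow (n := 2),
      integral_cos_sq, cos_pi, sin_pi, cos_zero, sin_zero]
    ring
  have hq1' : 1 - q ^ 2 ≠ 0 := by
    rw [show 1 - q ^ 2 = (1 - q) * (1 + q) by ring]
    exact mul_ne_zero (sub_ne_zero.mpr hq1.symm) (by positivity)
  -- Partial fractions in `sin x ^ 2`; this is why `q = 1` is treated separately.
  have hsplit : ∀ x, cos x ^ 4 / (cos x ^ 2 + q ^ 2 * sin x ^ 2)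
      = (q ^ 4 * (1 / (cos x ^ 2 + q ^ 2 * sin x ^ 2)) - 2 * q ^ 2
          + (cos x ^ 2 + q ^ 2 * sin x ^ 2)) / (1 - q ^ 2) ^ 2 := by
    intro x
    have := (cos_sq_add_mul_sin_sq_pos (pow_pos hq 2) x).ne'
    field_simp
    linear_combination
      (q ^ 4 * (cos x ^ 2 + 1 - sin x ^ 2) - 2 * q ^ 2 * cos x ^ 2) * sin_sq_add_cos_sq x
  have hinv : IntervalIntegrable (fun x => 1 / (cos x ^ 2 + q ^ 2 * sin x ^ 2)) volume 0 π :=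
    (continuous_const.div_cos_sq_add_mul_sin_sq (pow_pos hq 2)).intervalIntegrable _ _
  have hconst : IntervalIntegrable (fun _ => 2 * q ^ 2) volume 0 π := intervalIntegrable_const
  have hD : ∫ x in (0 : ℝ)..π, (cos x ^ 2 + q ^ 2 * sin x ^ 2) = π * (1 + q ^ 2) / 2 := by
    rw [intervalIntegral.integral_add
      ((by fun_prop : Continuous fun x => cos x ^ 2).intervalIntegrable _ _)
      ((by fun_prop : Continuous fun x => q ^ 2 * sin x ^ 2).intervalIntegrable _ _),
      intervalIntegral.integral_const_mul]
    simp only [integral_cos_sq, integral_sin_sq, cos_pi, sin_pi, cos_zero, sin_zero]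
    ring
  simp_rw [hsplit]
  rw [intervalIntegral.integral_div, intervalIntegral.integral_add ((hinv.const_mul _).sub hconst)
      ((by fun_prop : Continuous fun x => cos x ^ 2 + q ^ 2 * sin x ^ 2).intervalIntegrable _ _),
    intervalIntegral.integral_sub (hinv.const_mul _) hconst, intervalIntegral.integral_const_mul,
    integral_one_div_cos_sq_add_sq_mul_sin_sq hq, hD, intervalIntegral.integral_const, smul_eq_mul,
    sub_zero]
  field_simp
  ring

theorem abs_mul_sin_lt_one {a : ℝ} (ha : |a| < 1) (x : ℝ) : |a * sin x| < 1 := by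
  rw [abs_mul]
  exact (mul_le_of_le_one_right (abs_nonneg a) (abs_sin_le_one x)).trans_lt ha

theorem hasDerivAt_log_one_sub_mul_sin_div_one_add {a : ℝ} (ha : |a| < 1) (x : ℝ) :
    HasDerivAt (fun x => log ((1 - a * sin x) / (1 + a * sin x)))
      (-(2 * a * cos x) / (1 - a ^ 2 * sin x ^ 2)) x := by
  obtain ⟨hlt, hgt⟩ := abs_lt.mp (abs_mul_sin_lt_one ha x)
  have hsub : 0 < 1 - a * sin x := by linarith
  have hadd : 0 < 1 + a * sin x := by linarith
  have h := ((((hasDerivAt_sin x).const_mul a).const_sub 1).div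
    (((hasDerivAt_sin x).const_mul a).const_add 1) hadd.ne').log (div_pos hsub hadd).ne'
  refine h.congr_deriv ?_
  rw [show 1 - a ^ 2 * sin x ^ 2 = (1 - a * sin x) * (1 + a * sin x) by ring]
  simp only [Pi.div_apply]
  field_simp
  ring

theorem integral_cos_sq_mul_sin_mul_log_one_sub_mul_sin_div_one_add {a : ℝ} (ha : |a| < 1) :
    ∫ x in (0 : ℝ)..π, cos x ^ 2 * sin x * log ((1 - a * sin x) / (1 + a * sin x))
      = -(2 * a / 3) * ∫ x in (0 : ℝ)..π, cos x ^ 4 / (1 - a ^ 2 * sin x ^ 2) := by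
  have hpos : ∀ x, 0 < 1 - a ^ 2 * sin x ^ 2 := fun x => by
    have := abs_mul_sin_lt_one ha x
    nlinarith [sq_abs (a * sin x), abs_nonneg (a * sin x)]
  have hv : ∀ x, HasDerivAt (fun x => -cos x ^ 3 / 3) (cos x ^ 2 * sin x) x := fun x => by
    refine (((hasDerivAt_cos x).pow 3).neg.div_const 3).congr_deriv ?_
    ring
  have hu'int :
      IntervalIntegrable (fun x => -(2 * a * cos x) / (1 - a ^ 2 * sin x ^ 2)) volume 0 π :=
    (Continuous.div (by fun_prop) (by fun_prop) fun x => (hpos x).ne').intervalIntegrable _ _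
  have hparts := intervalIntegral.integral_mul_deriv_eq_deriv_mul
    (fun x _ => hasDerivAt_log_one_sub_mul_sin_div_one_add ha x) (fun x _ => hv x) hu'int
    ((by fun_prop : Continuous fun x => cos x ^ 2 * sin x).intervalIntegrable _ _)
  simp only [sin_pi, sin_zero, mul_zero, sub_zero, add_zero, div_one, log_one, zero_mul] at hparts
  simp_rw [mul_comm (cos _ ^ 2 * sin _), hparts, ← intervalIntegral.integral_const_mul]
  rw [zero_sub, ← intervalIntegral.integral_neg]
  refine intervalIntegral.integral_congr fun x _ => ?_
  ring

theorem expectation_cos_sq_sin_log (lam0 : ℝ) (h0 : 0 < lam0) (h1 : lam0 < 1 / 2) :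
    (1 / π) * ∫ ν in (0 : ℝ)..π,
        Real.cos ν ^ 2 * Real.sin ν *
          Real.log ((1 - (4 * lam0 / (1 + 4 * lam0 ^ 2)) * Real.sin ν) /
            (1 + (4 * lam0 / (1 + 4 * lam0 ^ 2)) * Real.sin ν))
      = -lam0 + (4 / 3) * lam0 ^ 3 := by
  set a := 4 * lam0 / (1 + 4 * lam0 ^ 2)
  set q := (1 - 4 * lam0 ^ 2) / (1 + 4 * lam0 ^ 2)
  have hden : 0 < 1 + 4 * lam0 ^ 2 := by positivity
  have ha : |a| < 1 := by
    rw [abs_lt, lt_div_iff₀ hden, div_lt_one hden]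
    constructor <;> nlinarith [sq_nonneg (1 - 2 * lam0)]
  have hq : 0 < q := div_pos (by nlinarith) hden
  have hsq : ∀ x, 1 - a ^ 2 * sin x ^ 2 = cos x ^ 2 + q ^ 2 * sin x ^ 2 := fun x => by
    simp only [a, q]
    field_simp
    linear_combination (1 + 4 * lam0 ^ 2) ^ 2 * (cos_sq_add_sin_sq x).symm
  simp_rw [integral_cos_sq_mul_sin_mul_log_one_sub_mul_sin_div_one_add ha, hsq,
    integral_cos_pow_four_div_cos_sq_add_sq_mul_sin_sq hq, a, q]
  field_simp
  ring
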